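/- Let L be an N×N Hermitian positive definite complex matrix, let a > 0 be real, let L^{1/2} be the positive definite square root of L, and set Z(L) = (1/n)∑_{i=1}^n Uᵢ(Uᵢ*LUᵢ)⁻¹Uᵢ*. If (1−a) + a·λ_min( (I+L)⁻¹ + L^{1/2} Z(L) L^{1/2} ) > 0, where λ_min denotes the smallest eigenvalue of the indicated Hermitian matrix, then L + a L Δ(L) L is Hermitian positive definite. -/

import Mathlib

open Matrix
open scoped ComplexOrder

/-- The square root of a positive semidefinite matrix, as defined in the older Mathlib
(removed from current Mathlib). -/
noncomputable def Matrix.PosSemidef.sqrt {𝕜 : Type*} [RCLike 𝕜] {m : Type*} [Fintype m]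
    [DecidableEq m] {A : Matrix m m 𝕜} (hA : A.PosSemidef) : Matrix m m 𝕜 :=
  hA.1.eigenvectorUnitary.1 * diagonal ((↑) ∘ (√·) ∘ hA.1.eigenvalues) *
    (star hA.1.eigenvectorUnitary : Matrix m m 𝕜)

/-- Δ(L) = (1/n)∑ᵢ Uᵢ(Uᵢ*LUᵢ)⁻¹Uᵢ* − (I+L)⁻¹. -/
noncomputable def Delta {N n : ℕ} {k : Fin n → ℕ}
    (U : (i : Fin n) → Matrix (Fin N) (Fin (k i)) ℂ)
    (L : Matrix (Fin N) (Fin N) ℂ) : Matrix (Fin N) (Fin N) ℂ :=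
  (n : ℂ)⁻¹ • (∑ i, U i * ((U i)ᴴ * L * U i)⁻¹ * (U i)ᴴ) - (1 + L)⁻¹

/-- Z(L) = (1/n)∑ᵢ Uᵢ(Uᵢ*LUᵢ)⁻¹Uᵢ*. -/
noncomputable def Zmat {N n : ℕ} {k : Fin n → ℕ}
    (U : (i : Fin n) → Matrix (Fin N) (Fin (k i)) ℂ)
    (L : Matrix (Fin N) (Fin N) ℂ) : Matrix (Fin N) (Fin N) ℂ :=
  (n : ℂ)⁻¹ • (∑ i, U i * ((U i)ᴴ * L * U i)⁻¹ * (U i)ᴴ)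

/-!
With `S = L^{1/2}` and `Z = Z(L)`, the update factors as the congruence
`L + a L Δ(L) L = S ((1 - a) I + a ((I + L)⁻¹ + S Z S)) S`,
because `S` commutes with `(I + L)⁻¹`, so that `S (I + L)⁻¹ S = I - (I + L)⁻¹`.
The middle factor is `(1 - a) I + a M` for the Hermitian `M` of the hypothesis; its eigenvalues
are `(1 - a) + a λ ≥ (1 - a) + a λ_min(M) > 0`, and congruence by the invertible `S` preserves
positive definiteness.
-/

namespace Matrix

section RCLike

variable {n 𝕜 : Type*} [Fintype n] [DecidableEq n] [RCLike 𝕜]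

lemma PosSemidef.sqrt_eq_cfc {A : Matrix n n 𝕜} (hA : A.PosSemidef) :
    hA.sqrt = cfc Real.sqrt A := by
  rw [hA.1.cfc_eq]; rfl

lemma PosSemidef.sqrt_mul_self {A : Matrix n n 𝕜} (hA : A.PosSemidef) :
    hA.sqrt * hA.sqrt = A := by
  rw [hA.sqrt_eq_cfc, ← cfc_mul Real.sqrt Real.sqrt A]
  conv_rhs => rw [← cfc_id' ℝ A hA.1.isSelfAdjoint]
  refine cfc_congr fun x hx => Real.mul_self_sqrt ?_
  rw [hA.1.spectrum_real_eq_range_eigenvalues] at hx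
  obtain ⟨i, rfl⟩ := hx
  exact hA.eigenvalues_nonneg i

lemma PosSemidef.isHermitian_sqrt {A : Matrix n n 𝕜} (hA : A.PosSemidef) :
    hA.sqrt.IsHermitian := by
  rw [hA.sqrt_eq_cfc]; exact cfc_predicate _ _

lemma IsHermitian.posDef_smul_one_add_smul {M : Matrix n n 𝕜} (hM : M.IsHermitian) {s t : ℝ}
    (ht : 0 ≤ t) (h : 0 < s + t * ⨅ i, hM.eigenvalues i) :
    ((s : 𝕜) • (1 : Matrix n n 𝕜) + (t : 𝕜) • M).PosDef := by
  have hdiag : diagonal (RCLike.ofReal ∘ fun i => s + t * hM.eigenvalues i) =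
      (s : 𝕜) • (1 : Matrix n n 𝕜) +
        (t : 𝕜) • diagonal (RCLike.ofReal ∘ hM.eigenvalues) := by
    rw [smul_one_eq_diagonal, ← diagonal_smul, diagonal_add]
    congr 1; ext i; simp
  have hconj : (s : 𝕜) • (1 : Matrix n n 𝕜) + (t : 𝕜) • M =
      Unitary.conjStarAlgAut 𝕜 _ hM.eigenvectorUnitary
        (diagonal (RCLike.ofReal ∘ fun i => s + t * hM.eigenvalues i)) := by
    rw [hdiag, map_add, map_smul, map_smul, map_one, ← hM.spectral_theorem]
  rw [hconj, Unitary.conjStarAlgAut_apply, Unitary.isUnit_coe.posDef_star_right_conjugate_iff,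
    posDef_diagonal_iff]
  intro i
  have := ciInf_le (Finite.bddBelow_range hM.eigenvalues) i
  rw [Function.comp_apply, RCLike.ofReal_pos]
  nlinarith

end RCLike

section CommRing

variable {n R : Type*} [Fintype n] [DecidableEq n] [CommRing R]

lemma mul_inv_one_add_mul_self_mul {S : Matrix n n R} (h : IsUnit (1 + S * S)) :
    S * (1 + S * S)⁻¹ * S = 1 - (1 + S * S)⁻¹ := by
  have hc : Commute S (1 + S * S) :=
    (Commute.one_right S).add_right ((Commute.refl S).mul_right (Commute.refl S))
  obtain ⟨u, hu⟩ := h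
  have hSS : S * S = u - 1 := by rw [hu]; abel
  rw [← hu] at hc ⊢
  rw [← coe_units_inv, hc.units_inv_right.eq, mul_assoc, hSS, mul_sub, Units.inv_mul, mul_one]

lemma add_smul_mul_sub_inv_mul_eq {S L : Matrix n n R} (Z : Matrix n n R) (a : R)
    (hSS : S * S = L) (hL : IsUnit (1 + L)) :
    L + a • (L * (Z - (1 + L)⁻¹) * L) =
      S * ((1 - a) • 1 + a • ((1 + L)⁻¹ + S * Z * S)) * S := by
  subst hSS
  have key := mul_inv_one_add_mul_self_mul hL
  set T := (1 + S * S)⁻¹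
  calc S * S + a • (S * S * (Z - T) * (S * S))
      = S * S + a • (S * (S * Z * S) * S) - a • (S * (S * T * S) * S) := by
        simp only [mul_sub, sub_mul, smul_sub, mul_assoc]; abel
    _ = _ := by
        rw [key]
        simp only [mul_add, add_mul, mul_sub, sub_mul, smul_add, smul_sub, sub_smul, one_smul,
          mul_smul_comm, smul_mul_assoc, mul_one]
        abel

end CommRing

end Matrix

theorem step_posDef_of_eig_bound_general {N n : ℕ} {k : Fin n → ℕ}
    (U : (i : Fin n) → Matrix (Fin N) (Fin (k i)) ℂ)
    (L : Matrix (Fin N) (Fin N) ℂ) (hL : L.PosDef)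
    (a : ℝ) (ha : 0 < a)
    (hHerm : ((1 + L)⁻¹ +
        hL.posSemidef.sqrt * Zmat U L * hL.posSemidef.sqrt).IsHermitian)
    (hcond : 0 < (1 - a) + a * ⨅ j, hHerm.eigenvalues j) :
    (L + (a : ℂ) • (L * Delta U L * L)).PosDef := by
  set S := hL.posSemidef.sqrt
  have hSS : S * S = L := hL.posSemidef.sqrt_mul_self
  have hS : IsUnit S := isUnit_of_mul_isUnit_left (hSS ▸ hL.isUnit)
  have hDelta : Delta U L = Zmat U L - (1 + L)⁻¹ := rfl
  have hmid := (hHerm.posDef_smul_one_add_smul ha.le hcond).conjTranspose_mul_mul_same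
    (mulVec_injective_of_isUnit hS)
  rw [hL.posSemidef.isHermitian_sqrt.eq] at hmid
  push_cast at hmid
  rwa [hDelta, add_smul_mul_sub_inv_mul_eq _ _ hSS (PosDef.one.add hL).isUnit]

/-- If (1−a) + a·λ_min((I+L)⁻¹ + L^{1/2} Z(L) L^{1/2}) > 0 then the update
L + a L Δ(L) L is Hermitian positive definite. -/
theorem step_posDef_of_eig_bound {N n : ℕ} (hN : 0 < N) (hn : 0 < n)
    {k : Fin n → ℕ} (hk1 : ∀ i, 1 ≤ k i) (hkN : ∀ i, k i ≤ N)
    (U : (i : Fin n) → Matrix (Fin N) (Fin (k i)) ℂ)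
    (hU : ∀ i, (U i)ᴴ * U i = 1)
    (L : Matrix (Fin N) (Fin N) ℂ) (hL : L.PosDef)
    (a : ℝ) (ha : 0 < a)
    (hHerm : ((1 + L)⁻¹ +
        hL.posSemidef.sqrt * Zmat U L * hL.posSemidef.sqrt).IsHermitian)
    (hcond : 0 < (1 - a) + a * ⨅ j, hHerm.eigenvalues j) :
    (L + (a : ℂ) • (L * Delta U L * L)).PosDef :=
  step_posDef_of_eig_bound_general U L hL a ha hHerm hcond
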